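/- arXiv:1211.4668 — 2 statements merged into one kernel-verified Lean document; each statement's English description precedes it below -/
import Mathlib

section
/- (Acausal Gronwall inequality) Let η, C, γ, γ' > 0 and let (x_k)_{k≥0} be a bounded nonnegative sequence satisfying x_k ≤ C·2^{-γk} + η·Σ_{l=0}^{k-1} 2^{-γ(k-l)} x_l + η·Σ_{l≥k} 2^{-γ'(l-k)} x_l for all k ≥ 0. If η ≤ (1/4)·min{1 - 2^{-γ}, 1 - 2^{-γ'}, 1 - 2^{ρ-γ}} for some 0 < ρ < γ, then x_k ≤ (4C + sup_l x_l)·2^{-ρk} for all k ≥ 0. -/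
/-!
Write `t = 2^{-ρ}`, `s = 2^{ρ-γ}`, `q = 2^{-γ'}`, so that `2^{-γ} = s t`. If `x_l ≤ 2C t^l + ε` for
all `l`, then in the recursion the causal kernel satisfies `(st)^{k-l} t^l = s^{k-l} t^k`, and
the acausal one `t^{k+l} ≤ t^k`; both sums are then at most `(2C t^k + ε)` times a geometric
series, `1/(1-s)` resp. `1/(1-q)`, and the smallness of `η` turns the recursion into
`x_k ≤ 2C t^k + ε/2`. Starting from `ε = sup x` and iterating gives `x_k ≤ 2C t^k`.
-/

open Real Filter

open Finset in
lemma sum_range_pow_sub_le {s : ℝ} (hs0 : 0 ≤ s) (hs1 : s < 1) (k : ℕ) :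
    ∑ l ∈ range k, s ^ (k - l) ≤ (1 - s)⁻¹ := by
  calc ∑ l ∈ range k, s ^ (k - l)
      = ∑ j ∈ range k, s ^ (j + 1) := by
        rw [← sum_range_reflect]
        refine sum_congr rfl fun j hj => ?_
        rw [show k - (k - 1 - j) = j + 1 by have := mem_range.1 hj; omega]
    _ ≤ ∑ j ∈ range k, s ^ j :=
        sum_le_sum fun j _ => pow_le_pow_of_le_one hs0 hs1.le (Nat.le_succ j)
    _ ≤ (1 - s)⁻¹ := by
        rw [range_eq_Ico]
        simpa using geom_sum_Ico_le_of_lt_one (m := 0) (n := k) hs0 hs1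

lemma pow_sub_mul_le {r s t A ε : ℝ} (hr0 : 0 ≤ r) (hr : r ≤ s * t) (hs0 : 0 ≤ s)
    (ht0 : 0 ≤ t) (ht1 : t ≤ 1) (hA : 0 ≤ A) (hε : 0 ≤ ε) {k l : ℕ} (hlk : l ≤ k) :
    r ^ (k - l) * (A * t ^ l + ε) ≤ s ^ (k - l) * (A * t ^ k + ε) := by
  have hrs : r ≤ s := hr.trans (mul_le_of_le_one_right hs0 ht1)
  have hrst : r ^ (k - l) ≤ s ^ (k - l) * t ^ (k - l) := by
    rw [← mul_pow]; exact pow_le_pow_left₀ hr0 hr _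
  have htk : t ^ (k - l) * t ^ l = t ^ k := by rw [← pow_add, Nat.sub_add_cancel hlk]
  calc r ^ (k - l) * (A * t ^ l + ε)
      = A * (r ^ (k - l) * t ^ l) + r ^ (k - l) * ε := by ring
    _ ≤ A * (s ^ (k - l) * t ^ (k - l) * t ^ l) + s ^ (k - l) * ε := by
        gcongr
    _ = s ^ (k - l) * (A * t ^ k + ε) := by rw [mul_assoc _ (t ^ (k - l)), htk]; ring

lemma sum_range_pow_sub_mul_le {r s t A ε : ℝ} {x : ℕ → ℝ} (hr0 : 0 ≤ r) (hr : r ≤ s * t)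
    (hs0 : 0 ≤ s) (hs1 : s < 1) (ht0 : 0 ≤ t) (ht1 : t ≤ 1) (hA : 0 ≤ A) (hε : 0 ≤ ε)
    (hx : ∀ l, x l ≤ A * t ^ l + ε) (k : ℕ) :
    ∑ l ∈ Finset.range k, r ^ (k - l) * x l ≤ (A * t ^ k + ε) * (1 - s)⁻¹ := by
  calc ∑ l ∈ Finset.range k, r ^ (k - l) * x l
      ≤ ∑ l ∈ Finset.range k, s ^ (k - l) * (A * t ^ k + ε) := by
        refine Finset.sum_le_sum fun l hl => ?_
        calc r ^ (k - l) * x l ≤ r ^ (k - l) * (A * t ^ l + ε) := by gcongr; exact hx l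
          _ ≤ _ := pow_sub_mul_le hr0 hr hs0 ht0 ht1 hA hε (Finset.mem_range.1 hl).le
    _ = (A * t ^ k + ε) * ∑ l ∈ Finset.range k, s ^ (k - l) := by
        rw [← Finset.sum_mul, mul_comm]
    _ ≤ (A * t ^ k + ε) * (1 - s)⁻¹ := by
        gcongr; exact sum_range_pow_sub_le hs0 hs1 k

lemma tsum_pow_mul_shift_le {q t A ε : ℝ} {x : ℕ → ℝ} (hq0 : 0 ≤ q) (hq1 : q < 1)
    (ht0 : 0 ≤ t) (ht1 : t ≤ 1) (hA : 0 ≤ A) (hx0 : ∀ l, 0 ≤ x l)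
    (hx : ∀ l, x l ≤ A * t ^ l + ε) (k : ℕ) :
    ∑' l, q ^ l * x (k + l) ≤ (A * t ^ k + ε) * (1 - q)⁻¹ := by
  have hterm : ∀ l, q ^ l * x (k + l) ≤ (A * t ^ k + ε) * q ^ l := fun l => by
    have : t ^ (k + l) ≤ t ^ k := pow_le_pow_of_le_one ht0 ht1 (k.le_add_right l)
    calc q ^ l * x (k + l) ≤ q ^ l * (A * t ^ (k + l) + ε) := by gcongr; exact hx _
      _ ≤ q ^ l * (A * t ^ k + ε) := by gcongr
      _ = (A * t ^ k + ε) * q ^ l := mul_comm _ _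
  have hgeom := (summable_geometric_of_lt_one hq0 hq1).mul_left (A * t ^ k + ε)
  calc ∑' l, q ^ l * x (k + l) ≤ ∑' l, (A * t ^ k + ε) * q ^ l :=
        (hgeom.of_nonneg_of_le (fun l => by have := hx0 (k + l); positivity) hterm).tsum_le_tsum
          hterm hgeom
    _ = (A * t ^ k + ε) * (1 - q)⁻¹ := by rw [tsum_mul_left, tsum_geometric_of_lt_one hq0 hq1]

namespace AcausalGronwall

variable {η C M q r s t : ℝ} {x : ℕ → ℝ}

lemma le_two_mul_pow_add_half (hη : 0 < η) (hC : 0 ≤ C) (hq0 : 0 ≤ q) (hr0 : 0 ≤ r)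
    (hr : r ≤ s * t) (hs0 : 0 ≤ s) (ht0 : 0 ≤ t) (ht1 : t ≤ 1)
    (hηs : 4 * η ≤ 1 - s) (hηq : 4 * η ≤ 1 - q) (hx0 : ∀ l, 0 ≤ x l)
    (hrec : ∀ k, x k ≤ C * r ^ k + η * ∑ l ∈ Finset.range k, r ^ (k - l) * x l
        + η * ∑' l, q ^ l * x (k + l))
    {ε : ℝ} (hε : 0 ≤ ε) (hx : ∀ l, x l ≤ 2 * C * t ^ l + ε) (k : ℕ) :
    x k ≤ 2 * C * t ^ k + ε / 2 := by
  have hs1 : s < 1 := by linarith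
  have hq1 : q < 1 := by linarith
  have hrt : r ≤ t := hr.trans (mul_le_of_le_one_left ht0 hs1.le)
  have hcausal := sum_range_pow_sub_mul_le hr0 hr hs0 hs1 ht0 ht1 (by positivity) hε hx k
  have hacausal := tsum_pow_mul_shift_le hq0 hq1 ht0 ht1 (by positivity) hx0 hx k
  have hηs' : η * (1 - s)⁻¹ ≤ 1 / 4 := by
    rw [← div_eq_mul_inv, div_le_iff₀ (by linarith)]; linarith
  have hηq' : η * (1 - q)⁻¹ ≤ 1 / 4 := by
    rw [← div_eq_mul_inv, div_le_iff₀ (by linarith)]; linarith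
  calc x k ≤ C * r ^ k + η * ((2 * C * t ^ k + ε) * (1 - s)⁻¹)
        + η * ((2 * C * t ^ k + ε) * (1 - q)⁻¹) := by
        refine (hrec k).trans ?_; gcongr
    _ = C * r ^ k + (2 * C * t ^ k + ε) * (η * (1 - s)⁻¹ + η * (1 - q)⁻¹) := by ring
    _ ≤ C * t ^ k + (2 * C * t ^ k + ε) * (1 / 4 + 1 / 4) := by gcongr
    _ = 2 * C * t ^ k + ε / 2 := by ring

lemma le_two_mul_pow (hη : 0 < η) (hC : 0 ≤ C) (hq0 : 0 ≤ q) (hr0 : 0 ≤ r)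
    (hr : r ≤ s * t) (hs0 : 0 ≤ s) (ht0 : 0 ≤ t) (ht1 : t ≤ 1)
    (hηs : 4 * η ≤ 1 - s) (hηq : 4 * η ≤ 1 - q) (hx0 : ∀ l, 0 ≤ x l) (hxM : ∀ l, x l ≤ M)
    (hrec : ∀ k, x k ≤ C * r ^ k + η * ∑ l ∈ Finset.range k, r ^ (k - l) * x l
        + η * ∑' l, q ^ l * x (k + l)) (k : ℕ) :
    x k ≤ 2 * C * t ^ k := by
  have hM0 : 0 ≤ M := (hx0 0).trans (hxM 0)
  have hbound : ∀ n l, x l ≤ 2 * C * t ^ l + M * (1 / 2) ^ n := by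
    intro n
    induction n with
    | zero => intro l; simpa using (hxM l).trans (le_add_of_nonneg_left (by positivity))
    | succ n ih =>
      intro l
      have := le_two_mul_pow_add_half hη hC hq0 hr0 hr hs0 ht0 ht1 hηs hηq hx0 hrec
        (by positivity) ih l
      rwa [pow_succ, ← mul_assoc, mul_one_div]
  have hlim : Tendsto (fun n : ℕ => 2 * C * t ^ k + M * (1 / 2) ^ n) atTop
      (nhds (2 * C * t ^ k)) := by
    simpa using tendsto_const_nhds.add
      ((tendsto_pow_atTop_nhds_zero_of_lt_one (r := (1 / 2 : ℝ)) (by norm_num)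
        (by norm_num)).const_mul M)
  exact ge_of_tendsto' hlim fun n => hbound n k

end AcausalGronwall

theorem stmt1_general (η C γ γ' ρ : ℝ) (hη : 0 < η) (hC : 0 < C)
    (x : ℕ → ℝ) (hpos : ∀ k, 0 ≤ x k) (hbdd : BddAbove (Set.range x))
    (hrec : ∀ k : ℕ, x k ≤ C * 2 ^ (-γ * (k : ℝ))
        + η * ∑ l ∈ Finset.range k, 2 ^ (-γ * ((k : ℝ) - (l : ℝ))) * x l
        + η * ∑' l : ℕ, 2 ^ (-γ' * (l : ℝ)) * x (k + l))
    (hρ : 0 < ρ)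
    (hsmall : η ≤ (1 / 4) *
        min (1 - 2 ^ (-γ)) (min (1 - 2 ^ (-γ')) (1 - 2 ^ (ρ - γ)))) :
    ∀ k : ℕ, x k ≤ (4 * C + ⨆ l, x l) * 2 ^ (-ρ * (k : ℝ)) := by
  have hxM : ∀ k, x k ≤ ⨆ l, x l := le_ciSup hbdd
  have hpow : ∀ (a : ℝ) (n : ℕ), (2 : ℝ) ^ (a * n) = (2 ^ a) ^ n := rpow_mul_natCast zero_le_two
  have hrec' : ∀ k : ℕ, x k ≤ C * ((2 : ℝ) ^ (-γ)) ^ k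
      + η * ∑ l ∈ Finset.range k, ((2 : ℝ) ^ (-γ)) ^ (k - l) * x l
      + η * ∑' l : ℕ, ((2 : ℝ) ^ (-γ')) ^ l * x (k + l) := fun k => by
    have hsum : ∑ l ∈ Finset.range k, (2 : ℝ) ^ (-γ * ((k : ℝ) - (l : ℝ))) * x l
        = ∑ l ∈ Finset.range k, ((2 : ℝ) ^ (-γ)) ^ (k - l) * x l :=
      Finset.sum_congr rfl fun l hl => by rw [← Nat.cast_sub (Finset.mem_range.1 hl).le, hpow]
    simpa only [hpow, hsum] using hrec k
  have hsplit : (2 : ℝ) ^ (-γ) = 2 ^ (ρ - γ) * 2 ^ (-ρ) := by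
    rw [← rpow_add zero_lt_two]; ring_nf
  have hηs : 4 * η ≤ 1 - 2 ^ (ρ - γ) := by
    have := hsmall.trans (mul_le_mul_of_nonneg_left
      ((min_le_right _ _).trans (min_le_right _ _)) (by norm_num : (0 : ℝ) ≤ 1 / 4))
    linarith
  have hηq : 4 * η ≤ 1 - 2 ^ (-γ') := by
    have := hsmall.trans (mul_le_mul_of_nonneg_left
      ((min_le_right _ _).trans (min_le_left _ _)) (by norm_num : (0 : ℝ) ≤ 1 / 4))
    linarith
  have ht1 : (2 : ℝ) ^ (-ρ) ≤ 1 := rpow_le_one_of_one_le_of_nonpos one_le_two (by linarith)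
  intro k
  calc x k ≤ 2 * C * ((2 : ℝ) ^ (-ρ)) ^ k :=
        AcausalGronwall.le_two_mul_pow hη hC.le (by positivity) (by positivity) hsplit.le
          (by positivity) (by positivity) ht1 hηs hηq hpos hxM hrec' k
    _ ≤ (4 * C + ⨆ l, x l) * 2 ^ (-ρ * (k : ℝ)) := by
        rw [hpow]
        gcongr
        linarith [(hpos 0).trans (hxM 0)]

theorem stmt1 (η C γ γ' ρ : ℝ) (hη : 0 < η) (hC : 0 < C) (hγ : 0 < γ) (hγ' : 0 < γ')
    (x : ℕ → ℝ) (hpos : ∀ k, 0 ≤ x k) (hbdd : BddAbove (Set.range x))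
    (hrec : ∀ k : ℕ, x k ≤ C * 2 ^ (-γ * (k : ℝ))
        + η * ∑ l ∈ Finset.range k, 2 ^ (-γ * ((k : ℝ) - (l : ℝ))) * x l
        + η * ∑' l : ℕ, 2 ^ (-γ' * (l : ℝ)) * x (k + l))
    (hρ : 0 < ρ) (hργ : ρ < γ)
    (hsmall : η ≤ (1 / 4) *
        min (1 - 2 ^ (-γ)) (min (1 - 2 ^ (-γ')) (1 - 2 ^ (ρ - γ)))) :
    ∀ k : ℕ, x k ≤ (4 * C + ⨆ l, x l) * 2 ^ (-ρ * (k : ℝ)) :=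
  stmt1_general η C γ γ' ρ hη hC x hpos hbdd hrec hρ hsmall
end

section
/- (Sharpness of the auxiliary exponents) Let d ≥ 9, p > 8/d, and s_c = d/2 - 4/p with 1 ≤ s_c ≤ 2. Define r_1 = 2d(8/p - d + 6 + s_c) / (d(8/p - d + 6) + 2 s_c (d - 5 - 4/p)) and r_2 = 2d(2p + 8/p - d + 4 + s_c) / (d(2p + 8/p - d + 4) + 2 s_c (d - 4 - 4/p - p)). Then r_1 < pd/4 and r_2 < pd/4. -/
/-!
Eliminating `4 / p = d / 2 - s_c` turns the target `p d / 4` into `2 d / (d - 2 s_c)` and each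
`r_i` into `2 d A / (d A - 2 s_c B)`, with `(A, B) = (6 - s_c, 5 - s_c)` for `r_1` and
`(A, B) = (2 p + 4 - s_c, p + 4 - s_c)` for `r_2`. Cross-multiplying, `2 d A / (d A - 2 s B)` is
below `2 d / (d - 2 s)` exactly when `d s (A - B) > 0`.
-/

lemma two_mul_mul_div_lt_two_mul_div {D s A B : ℝ} (hD : 0 < D) (hs : 0 < s) (hBA : B < A)
    (hD2s : 0 < D - 2 * s) (hden : 0 < D * A - 2 * s * B) :
    2 * D * A / (D * A - 2 * s * B) < 2 * D / (D - 2 * s) := by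
  rw [div_lt_div_iff₀ hden hD2s]
  nlinarith [mul_pos (mul_pos hD hs) (sub_pos.2 hBA)]

lemma mul_div_four_eq_two_mul_div {D p s : ℝ} (hp : p ≠ 0) (hs : s = D / 2 - 4 / p) :
    p * D / 4 = 2 * D / (D - 2 * s) := by
  rw [hs, show D - 2 * (D / 2 - 4 / p) = 8 / p by ring]
  field_simp
  ring

theorem stmt19 (d : ℕ) (hd : 9 ≤ d) (p sc : ℝ) (hp : 8 / (d : ℝ) < p)
    (hsc : sc = (d : ℝ) / 2 - 4 / p) (h1 : 1 ≤ sc) (h2 : sc ≤ 2) :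
    2 * (d : ℝ) * (8 / p - (d : ℝ) + 6 + sc) /
        ((d : ℝ) * (8 / p - (d : ℝ) + 6) + 2 * sc * ((d : ℝ) - 5 - 4 / p)) <
      p * (d : ℝ) / 4 ∧
    2 * (d : ℝ) * (2 * p + 8 / p - (d : ℝ) + 4 + sc) /
        ((d : ℝ) * (2 * p + 8 / p - (d : ℝ) + 4) + 2 * sc * ((d : ℝ) - 4 - 4 / p - p)) <
      p * (d : ℝ) / 4 := by
  have hD : (9 : ℝ) ≤ d := by exact_mod_cast hd
  set D : ℝ := (d : ℝ)
  have hp0 : 0 < p := lt_trans (div_pos (by norm_num) (by linarith)) hp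
  have h4 : 4 / p = D / 2 - sc := by linarith
  have h8 : 8 / p = D - 2 * sc := by linarith [show 8 / p = 2 * (4 / p) by ring]
  rw [h8, h4, mul_div_four_eq_two_mul_div hp0.ne' hsc]
  constructor
  · calc _ = 2 * D * (6 - sc) / (D * (6 - sc) - 2 * sc * (5 - sc)) := by ring
      _ < _ := two_mul_mul_div_lt_two_mul_div (by linarith) (by linarith) (by linarith)
          (by linarith) (by nlinarith)
  · calc _ = 2 * D * (2 * p + 4 - sc) / (D * (2 * p + 4 - sc) - 2 * sc * (p + 4 - sc)) := by ring
      _ < _ := two_mul_mul_div_lt_two_mul_div (by linarith) (by linarith) (by linarith)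
          (by linarith) (by nlinarith)
end
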